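/- Let k ≥ 3 and let 𝒜 = {A₁, …, A_{k+1}} be an HCSP-system on a set S of size α(k) = k(k+1)/2. Extend S to S⁺ = S ∪ {b₁, …, b_{k+1}} by k+1 new elements, set Aᵢ⁺ = Aᵢ ∪ {bᵢ} for 1 ≤ i ≤ k+1 and A_{k+2}⁺ = {b₁, …, b_{k+1}}. Then 𝒜⁺ = {A₁⁺, …, A_{k+2}⁺} is an HCSP-system on S⁺ with |𝒜⁺| = k + 2 and |S⁺| = α(k+1). -/

import Mathlib

/-!
A point `a` of an HCSP-system can fail to be the intersection of two *distinct* members only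
if some member is the singleton `{a}`; such a member meets every other member in at most `a`,
so its index is useless for every other point. With `m ≥ 1` such points, the remaining ones
are separated by distinct pairs among the other `k + 1 - m` indices, whence
`α(k) ≤ m + C(k + 1 - m, 2) < C(k + 1, 2) = α(k)` for `k ≥ 3`. Once every point of `S` is
separated by distinct `Aᵢ, Aⱼ`, it is also separated by `Aᵢ⁺, Aⱼ⁺`, while `bᵢ = Aᵢ⁺ ∩ A⁺_{k+2}`.
-/

open Finset

lemma add_choose_two_sub_lt_choose_two {m n : ℕ} (hm : 1 ≤ m) (hmn : m ≤ n) (hn : 4 ≤ n) :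
    m + (n - m).choose 2 < n.choose 2 := by
  obtain ⟨n, rfl⟩ : ∃ n', n = n' + 1 := ⟨n - 1, by omega⟩
  have hsucc : (n + 1).choose 2 = n + n.choose 2 := by simp [Nat.choose_succ_succ]
  rcases le_or_gt m (n - 1) with hm' | hm'
  · have : (n + 1 - m).choose 2 ≤ n.choose 2 := Nat.choose_le_choose 2 (by omega)
    omega
  · have hzero : (n + 1 - m).choose 2 = 0 := Nat.choose_eq_zero_of_lt (by omega)
    have : 3 ≤ n.choose 2 := by
      simpa using Nat.choose_le_choose 2 (show 3 ≤ n by omega)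
    omega

section

variable {α ι : Type*} [DecidableEq α]

lemma union_singleton_inter_union_singleton {A B : Finset α} {x y : α}
    (hxB : x ∉ B) (hyA : y ∉ A) (hxy : x ≠ y) : (A ∪ {x}) ∩ (B ∪ {y}) = A ∩ B := by
  ext z
  simp only [mem_inter, mem_union, mem_singleton]
  grind

lemma union_singleton_inter_eq_singleton {A B : Finset α} {x : α} (hx : x ∈ B)
    (hAB : Disjoint A B) : (A ∪ {x}) ∩ B = {x} := by
  rw [union_singleton, insert_inter_of_mem hx, disjoint_iff_inter_eq_empty.mp hAB, insert_empty]

lemma card_le_choose_two_of_forall_exists_ne_inter_eq (A : ι → Finset α) (G : Finset α)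
    (T : Finset ι) (hG : ∀ a ∈ G, ∃ i ∈ T, ∃ j ∈ T, i ≠ j ∧ A i ∩ A j = {a}) :
    #G ≤ (#T).choose 2 := by
  classical
  let I : Sym2 ι → Finset α := Sym2.lift ⟨fun i j => A i ∩ A j, fun _ _ => inter_comm _ _⟩
  calc #G ≤ #(T.offDiag.image Sym2.mk.uncurry) := by
        refine card_le_card_of_forall_subsingleton (fun a z => I z = {a}) (fun a ha => ?_)
          fun z _ a ha a' ha' => singleton_inj.mp (ha.2.symm.trans ha'.2)
        obtain ⟨i, hi, j, hj, hij, h⟩ := hG a ha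
        exact ⟨s(i, j), mem_image.mpr ⟨(i, j), mem_offDiag.mpr ⟨hi, hj, hij⟩, rfl⟩, h⟩
    _ = (#T).choose 2 := Sym2.card_image_offDiag T

theorem exists_ne_inter_eq_singleton [Fintype ι] [DecidableEq ι] (A : ι → Finset α)
    (S : Finset α) (hA : ∀ a ∈ S, ∃ i j, A i ∩ A j = {a})
    (hι : 4 ≤ Fintype.card ι) (hS : (Fintype.card ι).choose 2 ≤ #S) :
    ∀ a ∈ S, ∃ i j, i ≠ j ∧ A i ∩ A j = {a} := by
  by_contra! hbad
  set Bad := S.filter fun a => ¬∃ i j, i ≠ j ∧ A i ∩ A j = {a}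
  set T := univ.filter fun i => ∃ c ∈ Bad, A i = {c}
  have hBad : Bad.Nonempty := by
    obtain ⟨a, ha, h⟩ := hbad
    exact ⟨a, mem_filter.mpr ⟨ha, by simpa using h⟩⟩
  have hBadT : #Bad ≤ #T := by
    refine card_le_card_of_forall_subsingleton (fun c i => A i = {c}) (fun a ha => ?_)
      fun i _ c hc c' hc' => singleton_inj.mp (hc.2.symm.trans hc'.2)
    obtain ⟨haS, hne⟩ := mem_filter.mp ha
    obtain ⟨i, j, hij⟩ := hA a haS
    obtain rfl | h := eq_or_ne i j
    · exact ⟨i, mem_filter.mpr ⟨mem_univ i, a, ha, by simpa using hij⟩, by simpa using hij⟩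
    · exact absurd ⟨i, j, h, hij⟩ hne
  -- An index `i` with `A i = {c}` can only witness `c` itself, so good elements avoid `T`.
  have hgood : #(S \ Bad) ≤ (#Tᶜ).choose 2 := by
    refine card_le_choose_two_of_forall_exists_ne_inter_eq A _ _ fun a ha => ?_
    obtain ⟨haS, haBad⟩ := mem_sdiff.mp ha
    obtain ⟨i, j, hij, h⟩ : ∃ i j, i ≠ j ∧ A i ∩ A j = {a} := by
      by_contra hne
      exact haBad (mem_filter.mpr ⟨haS, hne⟩)
    have hfree : ∀ l, a ∈ A l → l ∈ Tᶜ := fun l hl => mem_compl.mpr fun hlT => by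
      obtain ⟨-, c, hc, hlc⟩ := mem_filter.mp hlT
      rw [hlc, mem_singleton] at hl
      exact haBad (hl ▸ hc)
    have ha' : a ∈ A i ∩ A j := h ▸ mem_singleton_self a
    exact ⟨i, hfree i (mem_inter.mp ha').1, j, hfree j (mem_inter.mp ha').2, hij, h⟩
  have hsplit : #(S \ Bad) + #Bad = #S := card_sdiff_add_card_eq_card (filter_subset _ S)
  rw [card_compl] at hgood
  have := add_choose_two_sub_lt_choose_two (hBad.card_pos.trans_le hBadT) (card_le_univ T) hι
  omega

variable [Fintype ι]

/-- The system `𝒜⁺` of the paper. -/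
def extendSystem (A : ι → Finset α) (b : ι → α) : Finset (Finset α) :=
  (univ.image fun i => A i ∪ {b i}) ∪ {univ.image b}

variable {A : ι → Finset α} {b : ι → α}

lemma union_singleton_mem_extendSystem (i : ι) : A i ∪ {b i} ∈ extendSystem A b :=
  mem_union_left _ (mem_image_of_mem _ (mem_univ i))

lemma union_singleton_inter_image_eq_singleton (hbA : ∀ i j, b i ∉ A j) (i : ι) :
    (A i ∪ {b i}) ∩ univ.image b = {b i} :=
  union_singleton_inter_eq_singleton (mem_image_of_mem b (mem_univ i)) <|
    disjoint_right.mpr fun _ hx => by obtain ⟨j, -, rfl⟩ := mem_image.mp hx; exact hbA j i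

lemma exists_inter_eq_singleton_extendSystem {S : Finset α}
    (hsep : ∀ a ∈ S, ∃ i j, i ≠ j ∧ A i ∩ A j = {a}) (hb : Function.Injective b)
    (hbA : ∀ i j, b i ∉ A j) :
    ∀ a ∈ S ∪ univ.image b, ∃ P ∈ extendSystem A b, ∃ Q ∈ extendSystem A b, P ∩ Q = {a} := by
  intro a ha
  rcases mem_union.mp ha with haS | hab
  · obtain ⟨i, j, hij, h⟩ := hsep a haS
    refine ⟨_, union_singleton_mem_extendSystem i, _, union_singleton_mem_extendSystem j, ?_⟩
    rw [union_singleton_inter_union_singleton (hbA i j) (hbA j i) (hb.ne hij), h]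
  · obtain ⟨i, -, rfl⟩ := mem_image.mp hab
    exact ⟨_, union_singleton_mem_extendSystem i, _, mem_union_right _ (mem_singleton_self _),
      union_singleton_inter_image_eq_singleton hbA i⟩

lemma card_extendSystem (hb : Function.Injective b) (hbA : ∀ i j, b i ∉ A j)
    (hι : 2 ≤ Fintype.card ι) : #(extendSystem A b) = Fintype.card ι + 1 := by
  have hAb := union_singleton_inter_image_eq_singleton hbA
  have hinj : Function.Injective fun i => A i ∪ {b i} := fun i j h =>
    hb (singleton_inj.mp ((hAb i).symm.trans (by simp only at h; rw [h, hAb j])))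
  have hnotmem : univ.image b ∉ univ.image fun i => A i ∪ {b i} := by
    intro hmem
    obtain ⟨i, -, hi⟩ := mem_image.mp hmem
    have := congrArg card ((inter_self _).symm.trans (hi ▸ hAb i))
    rw [card_image_of_injective _ hb, card_univ, card_singleton] at this
    omega
  rw [extendSystem, union_comm, ← insert_eq, card_insert_of_notMem hnotmem,
    card_image_of_injective _ hinj, card_univ]

end

theorem stmt_17_general {α : Type*} [DecidableEq α] (k : ℕ) (hk : 3 ≤ k)
    (S : Finset α) (hS : S.card = k * (k + 1) / 2)
    (A : Fin (k + 1) → Finset α) (hsub : ∀ i, A i ⊆ S)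
    (hcsp : ∀ a ∈ S, ∃ i j, A i ∩ A j = {a})
    (b : Fin (k + 1) → α) (hb : Function.Injective b) (hbS : ∀ i, b i ∉ S) :
    (∀ a ∈ S ∪ Finset.univ.image b,
        ∃ P ∈ (Finset.univ.image fun i => A i ∪ {b i}) ∪ {Finset.univ.image b},
        ∃ Q ∈ (Finset.univ.image fun i => A i ∪ {b i}) ∪ {Finset.univ.image b},
          P ∩ Q = {a}) ∧
    ((Finset.univ.image fun i => A i ∪ {b i}) ∪ {Finset.univ.image b}).card = k + 2 ∧
    (S ∪ Finset.univ.image b).card = (k + 1) * (k + 2) / 2 := by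
  have hchoose (n : ℕ) : (n + 1).choose 2 = n * (n + 1) / 2 := by
    rw [Nat.choose_two_right, Nat.add_sub_cancel, mul_comm]
  have hsep := exists_ne_inter_eq_singleton A S hcsp (by simp; omega)
    (by rw [Fintype.card_fin, hchoose, hS])
  have hbA (i j) : b i ∉ A j := fun h => hbS i (hsub j h)
  have hdisj : Disjoint S (univ.image b) :=
    disjoint_right.mpr fun x hx => by obtain ⟨i, -, rfl⟩ := mem_image.mp hx; exact hbS i
  refine ⟨exists_inter_eq_singleton_extendSystem hsep hb hbA, ?_, ?_⟩
  · rw [← extendSystem, card_extendSystem hb hbA (by simp; omega), Fintype.card_fin]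
  · rw [card_union_of_disjoint hdisj, hS, card_image_of_injective _ hb, card_univ,
      Fintype.card_fin, ← hchoose, ← hchoose, Nat.choose_succ_succ' (k + 1), Nat.choose_one_right]
    exact add_comm _ _

theorem stmt_17 {α : Type*} [DecidableEq α] (k : ℕ) (hk : 3 ≤ k)
    (S : Finset α) (hS : S.card = k * (k + 1) / 2)
    (A : Fin (k + 1) → Finset α) (hsub : ∀ i, A i ⊆ S)
    (hcsp : ∀ a ∈ S, ∃ i j, A i ∩ A j = {a})
    (hcard : (Finset.univ.image A).card = k + 1)
    (b : Fin (k + 1) → α) (hb : Function.Injective b) (hbS : ∀ i, b i ∉ S) :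
    (∀ a ∈ S ∪ Finset.univ.image b,
        ∃ P ∈ (Finset.univ.image fun i => A i ∪ {b i}) ∪ {Finset.univ.image b},
        ∃ Q ∈ (Finset.univ.image fun i => A i ∪ {b i}) ∪ {Finset.univ.image b},
          P ∩ Q = {a}) ∧
    ((Finset.univ.image fun i => A i ∪ {b i}) ∪ {Finset.univ.image b}).card = k + 2 ∧
    (S ∪ Finset.univ.image b).card = (k + 1) * (k + 2) / 2 :=
  stmt_17_general k hk S hS A hsub hcsp b hb hbS
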